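/- arXiv:1610.01997 — 5 statements merged into one kernel-verified Lean document; each statement's English description precedes it below -/
import Mathlib

section
/- Let H be an (n+1)-by-(n+1) Hermitian matrix with positive diagonal entries, in block form [[A, B],[B*, C]] with C a positive scalar. Then H has exactly one positive eigenvalue (counted with multiplicity) if and only if the Schur complement A - BC^{-1}B* is negative semidefinite. -/
open scoped ComplexOrder
open Matrix

lemma toEuclideanLin_eigenvectorBasis {m : Type*} [Fintype m] [DecidableEq m]
    {M : Matrix m m ℂ} (hM : M.IsHermitian) (j : m) :
    Matrix.toEuclideanLin M (hM.eigenvectorBasis j)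
      = (hM.eigenvalues j : ℂ) • hM.eigenvectorBasis j := by
  apply (WithLp.equiv 2 (m → ℂ)).injective
  have h := hM.mulVec_eigenvectorBasis j
  rw [toEuclideanLin_apply]
  show M *ᵥ ⇑(hM.eigenvectorBasis j) = _
  rw [h, RCLike.real_smul_eq_coe_smul (K := ℂ)]
  rfl

lemma inner_toEuclideanLin_sum {m : Type*} [Fintype m] [DecidableEq m]
    {M : Matrix m m ℂ} (hM : M.IsHermitian)
    {s : Type*} [Fintype s] (f : s → m) (hf : Function.Injective f) (d : s → ℂ) :
    (inner ℂ (∑ i, d i • hM.eigenvectorBasis (f i))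
      (Matrix.toEuclideanLin M (∑ i, d i • hM.eigenvectorBasis (f i))) : ℂ)
      = ∑ i, (hM.eigenvalues (f i) : ℂ) * Complex.normSq (d i) := by
  have hT : Matrix.toEuclideanLin M (∑ i, d i • hM.eigenvectorBasis (f i))
      = ∑ i, ((hM.eigenvalues (f i) : ℂ) * d i) • hM.eigenvectorBasis (f i) := by
    rw [map_sum]
    refine Finset.sum_congr rfl fun i _ => ?_
    rw [_root_.map_smul, toEuclideanLin_eigenvectorBasis, smul_smul, mul_comm]
  rw [hT]
  have := (hM.eigenvectorBasis.orthonormal.comp f hf).inner_sum d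
    (fun i => (hM.eigenvalues (f i) : ℂ) * d i) Finset.univ
  simp only [Function.comp] at this
  rw [this]
  refine Finset.sum_congr rfl fun i _ => ?_
  rw [← Complex.mul_conj]
  ring

lemma posdef_subspace_finrank_le {m : Type*} [Fintype m] [DecidableEq m]
    {M : Matrix m m ℂ} (hM : M.IsHermitian)
    (V : Submodule ℂ (EuclideanSpace ℂ m))
    (hV : ∀ x ∈ V, x ≠ 0 → 0 < (inner ℂ x (Matrix.toEuclideanLin M x) : ℂ).re) :
    Module.finrank ℂ V ≤ (Finset.univ.filter fun i => 0 < hM.eigenvalues i).card := by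
  classical
  by_contra hlt
  push_neg at hlt
  have hw_on : Orthonormal ℂ (fun i : {i // ¬ 0 < hM.eigenvalues i} => hM.eigenvectorBasis i.1) :=
    hM.eigenvectorBasis.orthonormal.comp _ Subtype.val_injective
  set N := Submodule.span ℂ
    (Set.range (fun i : {i // ¬ 0 < hM.eigenvalues i} => hM.eigenvectorBasis i.1)) with hN
  have hNrank : Module.finrank ℂ N = Fintype.card {i // ¬ 0 < hM.eigenvalues i} :=
    finrank_span_eq_card hw_on.linearIndependent
  have hcard : Fintype.card {i // ¬ 0 < hM.eigenvalues i}
      = Fintype.card m - (Finset.univ.filter fun i => 0 < hM.eigenvalues i).card := by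
    rw [Fintype.card_subtype]
    have h := Finset.card_filter_add_card_filter_not
      (s := (Finset.univ : Finset m)) (p := fun i => 0 < hM.eigenvalues i)
    simp only [Finset.card_univ] at h
    omega
  have hVN : 0 < Module.finrank ℂ ↥(V ⊓ N) := by
    have h1 := Submodule.finrank_sup_add_finrank_inf_eq V N
    have h2 : Module.finrank ℂ ↥(V ⊔ N) ≤ Fintype.card m := by
      simpa [finrank_euclideanSpace] using Submodule.finrank_le (V ⊔ N)
    have h3 : (Finset.univ.filter fun i => 0 < hM.eigenvalues i).card ≤ Fintype.card m := by
      exact le_trans (Finset.card_filter_le _ _) (le_of_eq Finset.card_univ)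
    omega
  have : Nontrivial ↥(V ⊓ N) := Module.finrank_pos_iff.mp hVN
  obtain ⟨y, hy⟩ := exists_ne (0 : ↥(V ⊓ N))
  have hx0 : (y : EuclideanSpace ℂ m) ≠ 0 := fun h => hy (Subtype.ext h)
  have hxV : (y : EuclideanSpace ℂ m) ∈ V := (Submodule.mem_inf.mp y.2).1
  have hxN : (y : EuclideanSpace ℂ m) ∈ N := (Submodule.mem_inf.mp y.2).2
  obtain ⟨d, hd⟩ := (Submodule.mem_span_range_iff_exists_fun ℂ).mp hxN
  have hinner := inner_toEuclideanLin_sum hM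
    (fun i : {i // ¬ 0 < hM.eigenvalues i} => i.1) Subtype.val_injective d
  rw [hd] at hinner
  have hle : ((inner ℂ (y : EuclideanSpace ℂ m)
      (Matrix.toEuclideanLin M (y : EuclideanSpace ℂ m)) : ℂ)).re ≤ 0 := by
    rw [hinner, Complex.re_sum]
    apply Finset.sum_nonpos
    intro i _
    have h1 : hM.eigenvalues i.1 ≤ 0 := not_lt.mp i.2
    have h2 : ((hM.eigenvalues i.1 : ℂ) * (Complex.normSq (d i) : ℂ)).re
        = hM.eigenvalues i.1 * Complex.normSq (d i) := by
      rw [← Complex.ofReal_mul, Complex.ofReal_re]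
    rw [h2]
    nlinarith [Complex.normSq_nonneg (d i)]
  exact absurd (hV _ hxV hx0) (not_lt.mpr hle)

lemma pos_span_posdef {m : Type*} [Fintype m] [DecidableEq m] {M : Matrix m m ℂ}
    (hM : M.IsHermitian) (x : EuclideanSpace ℂ m)
    (hx : x ∈ Submodule.span ℂ
      (Set.range (fun i : {i // 0 < hM.eigenvalues i} => hM.eigenvectorBasis i.1)))
    (hx0 : x ≠ 0) : 0 < (inner ℂ x (Matrix.toEuclideanLin M x) : ℂ).re := by
  classical
  obtain ⟨d, hd⟩ := (Submodule.mem_span_range_iff_exists_fun ℂ).mp hx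
  have hinner := inner_toEuclideanLin_sum hM
    (fun i : {i // 0 < hM.eigenvalues i} => i.1) Subtype.val_injective d
  rw [hd] at hinner
  have hdne : d ≠ 0 := by
    intro h
    apply hx0
    rw [← hd, h]
    simp
  obtain ⟨i0, hi0⟩ := Function.ne_iff.mp hdne
  rw [hinner, Complex.re_sum]
  have hre : ∀ i : {i // 0 < hM.eigenvalues i},
      ((hM.eigenvalues i.1 : ℂ) * (Complex.normSq (d i) : ℂ)).re
        = hM.eigenvalues i.1 * Complex.normSq (d i) := fun i => by
    rw [← Complex.ofReal_mul, Complex.ofReal_re]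
  apply Finset.sum_pos'
  · intro i _
    rw [hre i]
    have := i.2
    nlinarith [Complex.normSq_nonneg (d i)]
  · refine ⟨i0, Finset.mem_univ _, ?_⟩
    rw [hre i0]
    have h1 := i0.2
    have h2 : 0 < Complex.normSq (d i0) := Complex.normSq_pos.mpr hi0
    nlinarith

lemma trace_eq_sum_eigen {m : Type*} [Fintype m] [DecidableEq m] {M : Matrix m m ℂ}
    (hM : M.IsHermitian) : M.trace = ∑ i, (hM.eigenvalues i : ℂ) := by
  exact hM.trace_eq_sum_eigenvalues

lemma herm_dot_real {m : Type*} [Fintype m] {M : Matrix m m ℂ} (hM : M.IsHermitian)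
    (u : m → ℂ) : (starRingEnd ℂ) (star u ⬝ᵥ (M *ᵥ u)) = star u ⬝ᵥ (M *ᵥ u) := by
  rw [starRingEnd_apply, ← star_dotProduct_star, star_star, star_mulVec, hM.eq,
    ← dotProduct_mulVec]

lemma star_sum_elim {α : Type*} [Star α] {l r : Type*} (u : l → α) (w : r → α) :
    star (Sum.elim u w) = Sum.elim (star u) (star w) := by
  funext i; cases i <;> rfl

lemma dot_B_col {n : ℕ} (B : Matrix (Fin n) (Fin 1) ℂ) (u : Fin n → ℂ) (g : Fin 1 → ℂ) :
    star u ⬝ᵥ (B *ᵥ g) = (starRingEnd ℂ) ((Bᴴ *ᵥ u) 0) * g 0 := by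
  simp only [mulVec, dotProduct, conjTranspose_apply, Fin.sum_univ_one, map_sum, _root_.map_mul,
    Complex.star_def, Complex.conj_conj, Finset.sum_mul, Pi.star_apply]
  refine Finset.sum_congr rfl fun i _ => ?_
  ring

lemma key_identity {n : ℕ} (A : Matrix (Fin n) (Fin n) ℂ) (B : Matrix (Fin n) (Fin 1) ℂ)
    (c : ℝ) (hc : c ≠ 0) (u : Fin n → ℂ) (t : ℂ) :
    star (Sum.elim u (fun _ => t)) ⬝ᵥ
      ((Matrix.fromBlocks A B Bᴴ ((c : ℂ) • (1 : Matrix (Fin 1) (Fin 1) ℂ))) *ᵥ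
        (Sum.elim u fun _ => t))
    = star u ⬝ᵥ ((A - B * ((c : ℂ)⁻¹ • (1 : Matrix (Fin 1) (Fin 1) ℂ)) * Bᴴ) *ᵥ u)
      + (c : ℂ) * Complex.normSq (t + (c : ℂ)⁻¹ * (Bᴴ *ᵥ u) 0) := by
  have hc' : (c : ℂ) ≠ 0 := by exact_mod_cast Complex.ofReal_ne_zero.mpr hc
  set b : ℂ := (Bᴴ *ᵥ u) 0 with hb
  have h1 : (Sum.elim u (fun _ : Fin 1 => t)) ∘ Sum.inl = u := rfl
  have h2 : (Sum.elim u (fun _ : Fin 1 => t)) ∘ Sum.inr = (fun _ : Fin 1 => t) := rfl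
  rw [fromBlocks_mulVec, h1, h2, star_sum_elim, sumElim_dotProduct_sumElim]
  have e1 : star u ⬝ᵥ (A *ᵥ u + B *ᵥ fun _ : Fin 1 => t)
      = star u ⬝ᵥ (A *ᵥ u) + (starRingEnd ℂ) b * t := by
    rw [dotProduct_add, dot_B_col]
  have e2 : star (fun _ : Fin 1 => t) ⬝ᵥ (Bᴴ *ᵥ u + ((c : ℂ) • 1) *ᵥ fun _ : Fin 1 => t)
      = (starRingEnd ℂ) t * b + (starRingEnd ℂ) t * ((c : ℂ) * t) := by
    rw [dotProduct_add]
    congr 1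
    · simp [dotProduct, Fin.sum_univ_one, Complex.star_def, hb]
    · simp [dotProduct, Fin.sum_univ_one, smul_mulVec, one_mulVec, Complex.star_def]
  have e3 : star u ⬝ᵥ ((A - B * ((c : ℂ)⁻¹ • (1 : Matrix (Fin 1) (Fin 1) ℂ)) * Bᴴ) *ᵥ u)
      = star u ⬝ᵥ (A *ᵥ u) - (starRingEnd ℂ) b * ((c : ℂ)⁻¹ * b) := by
    rw [sub_mulVec, dotProduct_sub]
    congr 1
    rw [← mulVec_mulVec, ← mulVec_mulVec, dot_B_col]
    congr 1
    simp [smul_mulVec, one_mulVec, ← hb]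
  rw [e1, e2, e3]
  have e4 : ((Complex.normSq (t + (c : ℂ)⁻¹ * b) : ℝ) : ℂ)
      = (t + (c : ℂ)⁻¹ * b) * ((starRingEnd ℂ) t + (c : ℂ)⁻¹ * (starRingEnd ℂ) b) := by
    rw [← Complex.mul_conj]
    congr 1
    simp [map_add, _root_.map_mul, map_inv₀, Complex.conj_ofReal]
  rw [e4]
  field_simp
  ring

lemma inner_toEuclideanLin_eq_dot {m : Type*} [Fintype m] [DecidableEq m]
    (M : Matrix m m ℂ) (x : EuclideanSpace ℂ m) :
    (inner ℂ x (Matrix.toEuclideanLin M x) : ℂ) = star ⇑x ⬝ᵥ (M *ᵥ ⇑x) := by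
  rw [EuclideanSpace.inner_eq_star_dotProduct, toEuclideanLin_apply]
  rw [dotProduct_comm]

theorem one_positive_eigenvalue_iff_schur_complement_negSemidef {n : ℕ}
    (A : Matrix (Fin n) (Fin n) ℂ) (B : Matrix (Fin n) (Fin 1) ℂ)
    (c : ℝ) (hc : 0 < c)
    (H : Matrix (Fin n ⊕ Fin 1) (Fin n ⊕ Fin 1) ℂ)
    (hH : H = Matrix.fromBlocks A B Bᴴ ((c : ℂ) • (1 : Matrix (Fin 1) (Fin 1) ℂ)))
    (hHerm : H.IsHermitian)
    (hdiag : ∀ i, 0 < (H i i).re) :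
    (Finset.univ.filter fun i => 0 < hHerm.eigenvalues i).card = 1 ↔
      (-(A - B * ((c : ℂ)⁻¹ • (1 : Matrix (Fin 1) (Fin 1) ℂ)) * Bᴴ)).PosSemidef := by
  classical
  have hc0 : c ≠ 0 := ne_of_gt hc
  have hc' : (c : ℂ) ≠ 0 := Complex.ofReal_ne_zero.mpr hc0
  set S : Matrix (Fin n) (Fin n) ℂ :=
    A - B * ((c : ℂ)⁻¹ • (1 : Matrix (Fin 1) (Fin 1) ℂ)) * Bᴴ with hSdef
  have hA : Aᴴ = A := by
    ext i j
    have h := congrFun (congrFun hHerm.eq (Sum.inl i)) (Sum.inl j)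
    rw [hH] at h
    simpa [Matrix.conjTranspose_apply, Matrix.fromBlocks] using h
  have hS : S.IsHermitian := by
    rw [hSdef, Matrix.IsHermitian]
    rw [conjTranspose_sub, conjTranspose_mul, conjTranspose_mul, conjTranspose_conjTranspose,
      conjTranspose_smul, conjTranspose_one, hA]
    simp [Complex.star_def, map_inv₀, Complex.conj_ofReal, mul_assoc]
  constructor
  · -- exactly one positive eigenvalue → -S PosSemidef
    intro hp1
    refine PosSemidef.of_dotProduct_mulVec_nonneg hS.neg fun u => ?_
    set z : ℂ := star u ⬝ᵥ (S *ᵥ u) with hz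
    have hzre : (starRingEnd ℂ) z = z := herm_dot_real hS u
    have him : z.im = 0 := by
      have := congrArg Complex.im hzre
      simp only [Complex.conj_im] at this
      linarith
    have hval : star u ⬝ᵥ ((-S) *ᵥ u) = -z := by
      rw [neg_mulVec, dotProduct_neg, hz]
    rw [hval, Complex.le_def]
    simp only [Complex.zero_re, Complex.zero_im, Complex.neg_re, Complex.neg_im, him, neg_zero,
      and_true, le_neg]
    by_contra hq
    push_neg at hq
    -- 0 < z.re; build a 2-dimensional positive-definite subspace
    have hu0 : u ≠ 0 := by
      intro h
      rw [hz, h] at hq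
      simp at hq
    set b : ℂ := (Bᴴ *ᵥ u) 0 with hb
    set t0 : ℂ := -((c : ℂ)⁻¹ * b) with ht0
    set xv : (Fin n ⊕ Fin 1) → ℂ := Sum.elim u (fun _ => t0) with hxv
    set ev : (Fin n ⊕ Fin 1) → ℂ := Sum.elim (0 : Fin n → ℂ) (fun _ => 1) with hev
    set x0 : EuclideanSpace ℂ (Fin n ⊕ Fin 1) := (WithLp.equiv 2 _).symm xv with hx0d
    set e0 : EuclideanSpace ℂ (Fin n ⊕ Fin 1) := (WithLp.equiv 2 _).symm ev with he0d
    set V : Submodule ℂ (EuclideanSpace ℂ (Fin n ⊕ Fin 1)) :=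
      Submodule.span ℂ (Set.range ![x0, e0]) with hV
    have hpos : ∀ x ∈ V, x ≠ 0 → 0 < (inner ℂ x (Matrix.toEuclideanLin H x) : ℂ).re := by
      intro x hx hxne
      obtain ⟨dd, hdd⟩ := (Submodule.mem_span_range_iff_exists_fun ℂ).mp hx
      rw [Fin.sum_univ_two] at hdd
      simp only [Matrix.cons_val_zero, Matrix.cons_val_one, Matrix.head_cons] at hdd
      have hxcoe : ⇑x = Sum.elim (dd 0 • u) (fun _ : Fin 1 => dd 0 * t0 + dd 1) := by
        have h1 : ⇑x = dd 0 • xv + dd 1 • ev := by rw [← hdd]; rfl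
        rw [h1]
        funext i
        cases i with
        | inl i => simp [hxv, hev]
        | inr j => simp [hxv, hev]
      have hBs : (Bᴴ *ᵥ (dd 0 • u)) 0 = dd 0 * b := by
        rw [mulVec_smul, hb]; rfl
      have hkey := key_identity A B c hc0 (dd 0 • u) (dd 0 * t0 + dd 1)
      rw [inner_toEuclideanLin_eq_dot, hxcoe, hH, hkey, hBs]
      have harg : dd 0 * t0 + dd 1 + (c : ℂ)⁻¹ * (dd 0 * b) = dd 1 := by
        rw [ht0]; ring
      rw [harg]
      have hsm : star (dd 0 • u) ⬝ᵥ ((A - B * ((c : ℂ)⁻¹ • (1 : Matrix (Fin 1) (Fin 1) ℂ)) * Bᴴ)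
          *ᵥ (dd 0 • u)) = (Complex.normSq (dd 0) : ℂ) * z := by
        rw [mulVec_smul, star_smul, smul_dotProduct, dotProduct_smul, ← hSdef, ← hz]
        rw [smul_eq_mul, smul_eq_mul, ← Complex.mul_conj]
        simp only [Complex.star_def]
        ring
      rw [hsm]
      have hre : ((Complex.normSq (dd 0) : ℂ) * z + (c : ℂ) * (Complex.normSq (dd 1) : ℂ)).re
          = Complex.normSq (dd 0) * z.re + c * Complex.normSq (dd 1) := by
        simp [Complex.add_re, Complex.mul_re, Complex.ofReal_re, Complex.ofReal_im]
      rw [hre]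
      have hne : dd 0 ≠ 0 ∨ dd 1 ≠ 0 := by
        by_contra hcon
        push_neg at hcon
        apply hxne
        have : ⇑x = 0 := by
          rw [hxcoe, hcon.1, hcon.2]
          funext i
          cases i <;> simp
        exact WithLp.ofLp_injective 2 this
      rcases hne with h | h
      · have h1 : 0 < Complex.normSq (dd 0) := Complex.normSq_pos.mpr h
        nlinarith [Complex.normSq_nonneg (dd 1)]
      · have h1 : 0 < Complex.normSq (dd 1) := Complex.normSq_pos.mpr h
        nlinarith [Complex.normSq_nonneg (dd 0)]
    have hli : LinearIndependent ℂ ![x0, e0] := by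
      rw [LinearIndependent.pair_iff]
      intro s t hst
      have hfun : s • xv + t • ev = 0 := by
        have : ⇑(s • x0 + t • e0) = s • xv + t • ev := rfl
        rw [hst] at this
        exact this.symm.trans rfl
      have hs0 : s = 0 := by
        have hsu : s • u = 0 := by
          funext i
          have := congrFun hfun (Sum.inl i)
          simpa [hxv, hev] using this
        rcases smul_eq_zero.mp hsu with h | h
        · exact h
        · exact absurd h hu0
      have ht0' : t = 0 := by
        have := congrFun hfun (Sum.inr 0)
        simpa [hxv, hev, hs0] using this
      exact ⟨hs0, ht0'⟩
    have hdim : Module.finrank ℂ V = 2 := by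
      rw [hV, finrank_span_eq_card hli]
      simp
    have hbound := posdef_subspace_finrank_le hHerm V hpos
    rw [hdim, hp1] at hbound
    omega
  · -- -S PosSemidef → exactly one positive eigenvalue
    intro hpsd
    have hple : (Finset.univ.filter fun i => 0 < hHerm.eigenvalues i).card ≤ 1 := by
      by_contra hcon
      push_neg at hcon
      set Vp : Submodule ℂ (EuclideanSpace ℂ (Fin n ⊕ Fin 1)) := Submodule.span ℂ
        (Set.range (fun i : {i // 0 < hHerm.eigenvalues i} => hHerm.eigenvectorBasis i.1))
        with hVp
      have hw_on : Orthonormal ℂ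
          (fun i : {i // 0 < hHerm.eigenvalues i} => hHerm.eigenvectorBasis i.1) :=
        hHerm.eigenvectorBasis.orthonormal.comp _ Subtype.val_injective
      have hrank : Module.finrank ℂ Vp
          = (Finset.univ.filter fun i => 0 < hHerm.eigenvalues i).card := by
        rw [hVp, finrank_span_eq_card hw_on.linearIndependent, Fintype.card_subtype]
      set g : (Fin n ⊕ Fin 1) → ℂ :=
        Sum.elim (fun i => (c : ℂ)⁻¹ * Bᴴ 0 i) (fun _ => 1) with hg
      set φ : EuclideanSpace ℂ (Fin n ⊕ Fin 1) →ₗ[ℂ] ℂ :=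
        { toFun := fun x => g ⬝ᵥ ⇑x
          map_add' := fun x y => by
            show g ⬝ᵥ (⇑x + ⇑y) = _
            rw [dotProduct_add]
          map_smul' := fun a x => by
            show g ⬝ᵥ (a • ⇑x) = _
            rw [dotProduct_smul]
            rfl } with hφ
      have hψ := LinearMap.finrank_range_add_finrank_ker (φ.comp Vp.subtype)
      have hrange : Module.finrank ℂ (LinearMap.range (φ.comp Vp.subtype)) ≤ 1 := by
        have h := Submodule.finrank_le (LinearMap.range (φ.comp Vp.subtype))
        simpa [Module.finrank_self] using h
      have hker : 0 < Module.finrank ℂ (LinearMap.ker (φ.comp Vp.subtype)) := by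
        rw [hrank] at hψ
        omega
      have : Nontrivial ↥(LinearMap.ker (φ.comp Vp.subtype)) := Module.finrank_pos_iff.mp hker
      obtain ⟨y, hy⟩ := exists_ne (0 : ↥(LinearMap.ker (φ.comp Vp.subtype)))
      set xE : EuclideanSpace ℂ (Fin n ⊕ Fin 1) := ((y : ↥Vp) : EuclideanSpace ℂ (Fin n ⊕ Fin 1))
        with hxE
      have hxne : xE ≠ 0 := by
        intro h
        apply hy
        apply Subtype.ext
        apply Subtype.ext
        exact h
      have hmem : xE ∈ Vp := (y : ↥Vp).2
      have hφ0 : g ⬝ᵥ ⇑xE = 0 := by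
        have h := LinearMap.mem_ker.mp y.2
        exact h
      set u' : Fin n → ℂ := ⇑xE ∘ Sum.inl with hu'
      set t' : ℂ := ⇑xE (Sum.inr 0) with ht'
      have hsplit : ⇑xE = Sum.elim u' (fun _ : Fin 1 => t') := by
        funext i
        cases i with
        | inl i => rfl
        | inr j =>
          have : j = 0 := Subsingleton.elim j 0
          rw [this]
          rfl
      set b' : ℂ := (Bᴴ *ᵥ u') 0 with hb'
      have hφval : g ⬝ᵥ ⇑xE = t' + (c : ℂ)⁻¹ * b' := by
        rw [hsplit, hg]
        rw [show (Sum.elim (fun i => (c : ℂ)⁻¹ * Bᴴ 0 i) (fun _ : Fin 1 => 1)) ⬝ᵥ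
            (Sum.elim u' (fun _ : Fin 1 => t'))
            = (fun i => (c : ℂ)⁻¹ * Bᴴ 0 i) ⬝ᵥ u' + (fun _ : Fin 1 => (1:ℂ)) ⬝ᵥ (fun _ => t')
          from sumElim_dotProduct_sumElim _ _ _ _]
        have h1 : (fun i => (c : ℂ)⁻¹ * Bᴴ 0 i) ⬝ᵥ u' = (c : ℂ)⁻¹ * b' := by
          rw [hb']
          simp [dotProduct, mulVec, Finset.mul_sum, mul_assoc]
        have h2 : (fun _ : Fin 1 => (1:ℂ)) ⬝ᵥ (fun _ => t') = t' := by
          simp [dotProduct, Fin.sum_univ_one]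
        rw [h1, h2]
        ring
      have hzero : t' + (c : ℂ)⁻¹ * b' = 0 := by rw [← hφval, hφ0]
      have hposx := pos_span_posdef hHerm xE hmem hxne
      have hcompute : (inner ℂ xE (Matrix.toEuclideanLin H xE) : ℂ)
          = star u' ⬝ᵥ (S *ᵥ u') := by
        rw [inner_toEuclideanLin_eq_dot, hsplit, hH, key_identity A B c hc0 u' t', ← hb',
          hzero]
        simp [hSdef]
      rw [hcompute] at hposx
      have hneg := hpsd.dotProduct_mulVec_nonneg u'
      have hval : star u' ⬝ᵥ ((-S) *ᵥ u') = -(star u' ⬝ᵥ (S *ᵥ u')) := by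
        rw [neg_mulVec, dotProduct_neg]
      rw [hval, Complex.le_def] at hneg
      simp only [Complex.zero_re, Complex.neg_re] at hneg
      linarith [hneg.1]
    have hpge : 1 ≤ (Finset.univ.filter fun i => 0 < hHerm.eigenvalues i).card := by
      have hne : Nonempty (Fin n ⊕ Fin 1) := ⟨Sum.inr 0⟩
      have htr : (H.trace).re = ∑ i, hHerm.eigenvalues i := by
        rw [trace_eq_sum_eigen hHerm, Complex.re_sum]
        simp
      have hpos : 0 < ∑ i, hHerm.eigenvalues i := by
        rw [← htr, Matrix.trace]
        rw [Complex.re_sum]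
        exact Finset.sum_pos (fun i _ => hdiag i) Finset.univ_nonempty
      have hex : ∃ i, 0 < hHerm.eigenvalues i := by
        by_contra hall
        push_neg at hall
        have : ∑ i, hHerm.eigenvalues i ≤ 0 := Finset.sum_nonpos fun i _ => hall i
        linarith
      obtain ⟨i, hi⟩ := hex
      exact Finset.card_pos.mpr ⟨i, Finset.mem_filter.mpr ⟨Finset.mem_univ _, hi⟩⟩
    omega
end

section
/- Let X be a set, δ : X → ℂ a nowhere vanishing function, and F : X × X → ℂ a positive semidefinite kernel with |F(x,y)| < 1 for all x,y. Then the kernel k(x,y) = \overline{δ(x)} δ(y) / (1 - F(x,y)) is positive semidefinite on X. -/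
open scoped ComplexOrder
open Matrix ComplexConjugate

theorem NP_form_kernel_posSemidef {X : Type*}
    (δ : X → ℂ) (hδ : ∀ x, δ x ≠ 0)
    (F : X → X → ℂ)
    (hpsd : ∀ (n : ℕ) (x : Fin n → X),
      (Matrix.of fun i j => F (x i) (x j)).PosSemidef)
    (hlt : ∀ x y, ‖F x y‖ < 1) :
    ∀ (n : ℕ) (x : Fin n → X),
      (Matrix.of fun i j => conj (δ (x i)) * δ (x j) / (1 - F (x i) (x j))).PosSemidef := by
  intro n x
  have hA := hpsd n x
  obtain ⟨B, hB⟩ : ∃ B : Matrix (Fin n) (Fin n) ℂ, _ = Bᴴ * B := by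
    open scoped MatrixOrder in
    obtain ⟨B, hB⟩ := CStarAlgebra.nonneg_iff_eq_star_mul_self.mp hA.nonneg
    exact ⟨B, hB⟩
  have hAij : ∀ i j, F (x i) (x j) = ∑ k, conj (B k i) * B k j := by
    intro i j
    have := congrFun (congrFun hB i) j
    simpa [Matrix.mul_apply, Matrix.conjTranspose_apply] using this
  -- quadratic forms of Hadamard powers are nonnegative
  have key : ∀ (m : ℕ) (v : Fin n → ℂ),
      0 ≤ ∑ i, ∑ j, conj (v i) * v j * (F (x i) (x j)) ^ m := by
    intro m
    induction m with
    | zero =>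
      intro v
      have : ∑ i, ∑ j, conj (v i) * v j * (F (x i) (x j)) ^ 0
          = conj (∑ i, v i) * (∑ j, v j) := by
        rw [map_sum, Finset.sum_mul_sum]
        simp
      rw [this]
      exact star_mul_self_nonneg _
    | succ m ih =>
      intro v
      have step : ∑ i, ∑ j, conj (v i) * v j * (F (x i) (x j)) ^ (m + 1)
          = ∑ k, ∑ i, ∑ j,
              conj (v i * B k i) * (v j * B k j) * (F (x i) (x j)) ^ m := by
        have h1 : ∑ i, ∑ j, conj (v i) * v j * (F (x i) (x j)) ^ (m + 1)
            = ∑ i, ∑ j, ∑ k,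
                conj (v i * B k i) * (v j * B k j) * (F (x i) (x j)) ^ m := by
          refine Finset.sum_congr rfl fun i _ => Finset.sum_congr rfl fun j _ => ?_
          rw [pow_succ, hAij i j]
          simp only [Finset.mul_sum, _root_.map_mul]
          refine Finset.sum_congr rfl fun k _ => ?_
          ring
        have h2 : ∀ i : Fin n, ∑ j, ∑ k : Fin n,
                conj (v i * B k i) * (v j * B k j) * (F (x i) (x j)) ^ m
            = ∑ k : Fin n, ∑ j,
                conj (v i * B k i) * (v j * B k j) * (F (x i) (x j)) ^ m :=
          fun i => Finset.sum_comm
        rw [h1]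
        rw [Finset.sum_congr rfl fun i _ => h2 i]
        exact Finset.sum_comm
      rw [step]
      exact Finset.sum_nonneg fun k _ => ih (fun i => v i * B k i)
  refine Matrix.PosSemidef.of_dotProduct_mulVec_nonneg ?_ ?_
  · -- Hermitian
    ext i j
    have hsym := hA.1.apply i j
    simp only [Matrix.of_apply, RCLike.star_def] at hsym
    simp only [Matrix.conjTranspose_apply, Matrix.of_apply, star_div₀, star_mul',
      star_sub, star_one, star_star, RCLike.star_def, hsym, Complex.conj_conj]
    ring
  · intro v
    have hnorm : ∀ i j, ‖F (x i) (x j)‖ < 1 := by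
      intro i j; exact hlt _ _
    set u : Fin n → ℂ := fun i => δ (x i) * v i with hu
    have hsumm : ∀ i j : Fin n,
        Summable (fun m : ℕ => conj (u i) * u j * (F (x i) (x j)) ^ m) :=
      fun i j => (summable_geometric_of_norm_lt_one (hnorm i j)).mul_left _
    have hform : star v ⬝ᵥ ((Matrix.of fun i j =>
          conj (δ (x i)) * δ (x j) / (1 - F (x i) (x j))).mulVec v)
        = ∑ i, ∑ j, ∑' m : ℕ, conj (u i) * u j * (F (x i) (x j)) ^ m := by
      simp only [dotProduct, Matrix.mulVec, dotProduct, Matrix.of_apply,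
        Pi.star_apply, Finset.mul_sum]
      refine Finset.sum_congr rfl fun i _ => Finset.sum_congr rfl fun j _ => ?_
      rw [tsum_mul_left, tsum_geometric_of_norm_lt_one (hnorm i j)]
      simp only [hu, _root_.map_mul, RCLike.star_def]
      rw [div_eq_mul_inv]
      ring
    rw [hform]
    have h1 : ∀ i : Fin n,
        ∑ j, ∑' m : ℕ, conj (u i) * u j * (F (x i) (x j)) ^ m
          = ∑' m : ℕ, ∑ j, conj (u i) * u j * (F (x i) (x j)) ^ m :=
      fun i => (Summable.tsum_finsetSum fun j _ => hsumm i j).symm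
    rw [Finset.sum_congr rfl fun i _ => h1 i]
    rw [← Summable.tsum_finsetSum fun i (_ : i ∈ Finset.univ) =>
      summable_sum fun j _ => hsumm i j]
    exact tsum_nonneg fun m => key m u
end

section
/- Let H be a Hilbert space and B its open unit ball. Then the Szegő-type kernel a(x,y) = 1/(1 - ⟨y, x⟩) is a positive semidefinite kernel on B. -/
open scoped ComplexOrder
open Matrix Finset
open scoped Kronecker

/-- Schur product theorem (Hadamard product of PSD matrices is PSD) over ℂ. -/
lemma posSemidef_hadamard {n : Type*} [Fintype n] [DecidableEq n]
    {M N : Matrix n n ℂ} (hM : M.PosSemidef) (hN : N.PosSemidef) :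
    (Matrix.of fun i j => M i j * N i j).PosSemidef := by
  exact hM.hadamard hN

/-- The Gram matrix of a family of vectors is positive semidefinite. -/
lemma posSemidef_gram {H : Type*} [NormedAddCommGroup H] [InnerProductSpace ℂ H]
    {n : ℕ} (x : Fin n → H) :
    (Matrix.of fun i j => (inner ℂ (x j) (x i) : ℂ)).PosSemidef := by
  refine .of_dotProduct_mulVec_nonneg ?_ ?_
  · ext i j
    simp only [conjTranspose_apply, of_apply]
    exact inner_conj_symm _ _
  · intro v
    have key : star v ⬝ᵥ (Matrix.of fun i j => (inner ℂ (x j) (x i) : ℂ)) *ᵥ v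
        = inner ℂ (∑ i, star (v i) • x i) (∑ i, star (v i) • x i) := by
      rw [inner_sum]
      simp only [dotProduct, mulVec, of_apply, Pi.star_apply, inner_smul_right,
        sum_inner, inner_smul_left, star_star, starRingEnd_apply, Finset.mul_sum]
      refine Finset.sum_congr rfl fun i _ => Finset.sum_congr rfl fun j _ => ?_
      ring
    rw [key, inner_self_eq_norm_sq_to_K]
    exact pow_nonneg (Complex.zero_le_real.mpr (norm_nonneg (∑ i, star (v i) • x i))) 2

/-- Entrywise (Hadamard) powers of a PSD matrix are PSD. -/
lemma posSemidef_hadamard_pow {n : Type*} [Fintype n] [DecidableEq n]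
    {M : Matrix n n ℂ} (hM : M.PosSemidef) (k : ℕ) :
    (Matrix.of fun i j => (M i j) ^ k).PosSemidef := by
  induction k with
  | zero =>
    simp only [pow_zero]
    refine .of_dotProduct_mulVec_nonneg ?_ ?_
    · ext i j; simp
    · intro v
      have : star v ⬝ᵥ (Matrix.of fun _ _ => (1 : ℂ)) *ᵥ v
          = star (∑ j, v j) * (∑ j, v j) := by
        simp only [dotProduct, mulVec, of_apply, one_mul, star_sum, Finset.sum_mul]
        rfl
      rw [this]
      exact star_mul_self_nonneg _
  | succ k ih =>
    have hE : (Matrix.of fun i j => (M i j) ^ (k + 1))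
        = Matrix.of fun i j => (Matrix.of fun i j => (M i j) ^ k) i j * M i j := by
      ext i j
      simp [pow_succ]
    rw [hE]
    exact posSemidef_hadamard ih hM

theorem szego_kernel_posSemidef_on_ball {H : Type*}
    [NormedAddCommGroup H] [InnerProductSpace ℂ H] :
    ∀ (n : ℕ) (x : Fin n → H), (∀ i, ‖x i‖ < 1) →
      (Matrix.of fun i j => (1 - (inner ℂ (x j) (x i) : ℂ))⁻¹).PosSemidef := by
  intro n x hx
  have := Complex.orderClosedTopology
  set G : Matrix (Fin n) (Fin n) ℂ := Matrix.of fun i j => (inner ℂ (x j) (x i) : ℂ) with hG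
  have hGnorm : ∀ i j, ‖G i j‖ < 1 := by
    intro i j
    calc ‖(inner ℂ (x j) (x i) : ℂ)‖ ≤ ‖x j‖ * ‖x i‖ := norm_inner_le_norm _ _
      _ < 1 * 1 := by
          have h0 : (0:ℝ) ≤ ‖x j‖ := norm_nonneg _
          have h1 : (0:ℝ) ≤ ‖x i‖ := norm_nonneg _
          nlinarith [hx i, hx j]
      _ = 1 := one_mul 1
  have hgeom : ∀ i j, ∑' k : ℕ, (G i j) ^ k = (1 - G i j)⁻¹ := fun i j =>
    tsum_geometric_of_norm_lt_one (hGnorm i j)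
  have hsumm : ∀ i j, Summable (fun k : ℕ => (G i j) ^ k) := fun i j =>
    summable_geometric_of_norm_lt_one (hGnorm i j)
  refine .of_dotProduct_mulVec_nonneg ?_ ?_
  · ext i j
    simp only [conjTranspose_apply, of_apply, star_inv₀]
    congr 1
    rw [star_sub]
    simp [inner_conj_symm]
  · intro v
    set f : Fin n → Fin n → ℕ → ℂ :=
      fun i j k => star (v i) * ((G i j) ^ k * v j) with hf
    have h1 : ∀ i j, Summable (f i j) := fun i j =>
      ((hsumm i j).mul_right _).mul_left _
    have key : star v ⬝ᵥ (Matrix.of fun i j => (1 - (inner ℂ (x j) (x i) : ℂ))⁻¹) *ᵥ v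
        = ∑' k : ℕ, (star v ⬝ᵥ (Matrix.of fun i j => (G i j) ^ k) *ᵥ v) := by
      have hQ : ∀ k : ℕ, star v ⬝ᵥ (Matrix.of fun i j => (G i j) ^ k) *ᵥ v
          = ∑ i, ∑ j, f i j k := by
        intro k
        simp [dotProduct, mulVec, Finset.mul_sum, hf, mul_assoc]
      calc star v ⬝ᵥ (Matrix.of fun i j => (1 - (inner ℂ (x j) (x i) : ℂ))⁻¹) *ᵥ v
          = ∑ i, ∑ j, ∑' k : ℕ, f i j k := by
            simp only [dotProduct, mulVec, of_apply, Finset.mul_sum]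
            refine Finset.sum_congr rfl fun i _ => Finset.sum_congr rfl fun j _ => ?_
            have hg : (1 - (inner ℂ (x j) (x i) : ℂ))⁻¹ = ∑' k : ℕ, (G i j) ^ k :=
              (hgeom i j).symm
            rw [hg, tsum_mul_right.symm, tsum_mul_left.symm]
            exact tsum_congr fun k => rfl
        _ = ∑ i, ∑' k : ℕ, ∑ j, f i j k :=
            Finset.sum_congr rfl fun i _ => (Summable.tsum_finsetSum fun j _ => h1 i j).symm
        _ = ∑' k : ℕ, ∑ i, ∑ j, f i j k :=
            (Summable.tsum_finsetSum fun i _ => summable_sum fun j _ => h1 i j).symm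
        _ = ∑' k : ℕ, (star v ⬝ᵥ (Matrix.of fun i j => (G i j) ^ k) *ᵥ v) := by
            simp only [hQ]
    rw [key]
    exact tsum_nonneg fun k => (posSemidef_hadamard_pow (posSemidef_gram x) k).dotProduct_mulVec_nonneg v
end

section
/- Let K be an n-by-n positive definite Hermitian matrix with all entries nonzero, and H the entrywise reciprocal matrix H_{ij} = 1/K_{ij}. Then H has exactly one positive eigenvalue if and only if for each index p, the (n-1)-by-(n-1) matrix F^{(p)} with entries F^{(p)}_{ij} = 1 - K_{ip}K_{pj}/(K_{ij}K_{pp}) (i, j ≠ p) is positive semidefinite. -/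
open scoped ComplexOrder
open Matrix

section QuigginAux

open Finset

lemma qq_sum_split {M : Type*} [AddCommMonoid M] {n : ℕ} (p : Fin n) (f : Fin n → M) :
    ∑ i, f i = f p + ∑ i : {q : Fin n // q ≠ p}, f i.1 := by
  rw [← Finset.sum_subtype (Finset.univ.erase p) (fun x => by simp [Finset.mem_erase]) f]
  rw [← Finset.add_sum_erase _ f (Finset.mem_univ p)]

lemma qq_equiv_add {n : ℕ} (u v : EuclideanSpace ℂ (Fin n)) :
    WithLp.equiv 2 (Fin n → ℂ) (u + v) = WithLp.equiv 2 (Fin n → ℂ) u + WithLp.equiv 2 (Fin n → ℂ) v :=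
  rfl

lemma qq_equiv_smul {n : ℕ} (a : ℂ) (u : EuclideanSpace ℂ (Fin n)) :
    WithLp.equiv 2 (Fin n → ℂ) (a • u) = a • WithLp.equiv 2 (Fin n → ℂ) u :=
  rfl

lemma qq_equiv_zero {n : ℕ} : WithLp.equiv 2 (Fin n → ℂ) (0 : EuclideanSpace ℂ (Fin n)) = 0 :=
  rfl

lemma qq_herm_dot {n : ℕ} {H : Matrix (Fin n) (Fin n) ℂ} (hH : H.IsHermitian)
    (u v : Fin n → ℂ) :
    dotProduct (star u) (H.mulVec v)
      = (starRingEnd ℂ) (dotProduct (star v) (H.mulVec u)) := by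
  simp only [dotProduct, Matrix.mulVec, map_sum, _root_.map_mul, Finset.mul_sum]
  rw [Finset.sum_comm]
  refine Finset.sum_congr rfl fun i _ => Finset.sum_congr rfl fun j _ => ?_
  rw [← hH.apply j i]
  simp only [Pi.star_apply, Complex.star_def, Complex.conj_conj]
  ring

lemma qq_dot_sum {m ι : Type*} [Fintype m] [Fintype ι] (u : m → ℂ) (w : ι → m → ℂ) :
    dotProduct u (∑ i, w i) = ∑ i, dotProduct u (w i) := by
  simp only [dotProduct, Finset.sum_apply, Finset.mul_sum]
  exact Finset.sum_comm

lemma qq_dot_single {n : ℕ} (M : Matrix (Fin n) (Fin n) ℂ) (p : Fin n) :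
    dotProduct (star (Pi.single p 1)) (M.mulVec (Pi.single p 1)) = M p p := by
  rw [Matrix.mulVec_single]
  simp [dotProduct, Pi.single_apply, apply_ite, mul_ite, ite_mul]

lemma qq_real_nonpos {r : ℝ} : ((r : ℂ) ≤ 0) ↔ r ≤ 0 := by
  rw [← Complex.ofReal_zero, Complex.real_le_real]

lemma qq_neg_scale {κ : ℝ} (hκ : 0 < κ) (w : ℂ) : -(κ : ℂ) * w ≤ 0 ↔ 0 ≤ w := by
  rw [Complex.le_def, Complex.le_def]
  simp only [Complex.mul_re, Complex.mul_im, Complex.neg_re, Complex.neg_im,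
    Complex.ofReal_re, Complex.ofReal_im, Complex.zero_re, Complex.zero_im]
  constructor
  · rintro ⟨h1, h2⟩
    constructor <;> nlinarith
  · rintro ⟨h1, h2⟩
    constructor <;> nlinarith

lemma qq_Kpp {n : ℕ} {K : Matrix (Fin n) (Fin n) ℂ} (hK : K.PosDef) (p : Fin n) :
    ∃ κ : ℝ, 0 < κ ∧ K p p = (κ : ℂ) := by
  have h : (0 : ℂ) < K p p := by
    have h1 := hK.dotProduct_mulVec_pos (x := Pi.single p 1) (by
      intro hcon
      have := congrFun hcon p
      simp at this)
    rwa [qq_dot_single] at h1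
  rw [Complex.lt_def] at h
  refine ⟨(K p p).re, by simpa using h.1, ?_⟩
  apply Complex.ext
  · simp
  · simp [← h.2]

lemma qq_F_herm {n : ℕ} {K : Matrix (Fin n) (Fin n) ℂ} (hKh : K.IsHermitian) (p : Fin n) :
    (Matrix.of fun i j : {q : Fin n // q ≠ p} =>
      1 - K i.1 p * K p j.1 / (K i.1 j.1 * K p p)).IsHermitian := by
  rw [Matrix.IsHermitian]
  ext i j
  simp only [Matrix.conjTranspose_apply, Matrix.of_apply, Complex.star_def, map_sub,
    _root_.map_one, map_div₀, _root_.map_mul]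
  rw [show (starRingEnd ℂ) (K j.1 p) = K p j.1 from hKh.apply p j.1,
    show (starRingEnd ℂ) (K p i.1) = K i.1 p from hKh.apply i.1 p,
    show (starRingEnd ℂ) (K j.1 i.1) = K i.1 j.1 from hKh.apply i.1 j.1,
    show (starRingEnd ℂ) (K p p) = K p p from hKh.apply p p]
  ring

lemma qq_spectral {n : ℕ} {H : Matrix (Fin n) (Fin n) ℂ} (hH : H.IsHermitian)
    (x : EuclideanSpace ℂ (Fin n)) :
    dotProduct (star (WithLp.equiv 2 (Fin n → ℂ) x)) (H.mulVec (WithLp.equiv 2 (Fin n → ℂ) x))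
      = ((∑ i, hH.eigenvalues i * Complex.normSq (hH.eigenvectorBasis.repr x i) : ℝ) : ℂ) := by
  set b := hH.eigenvectorBasis with hb
  set c : Fin n → ℂ := fun i => b.repr x i with hc
  have hx : (WithLp.equiv 2 (Fin n → ℂ)) x = ∑ i, c i • (WithLp.equiv 2 (Fin n → ℂ)) (b i) := by
    conv_lhs => rw [← b.sum_repr x]
    simp [c, WithLp.ofLp_sum]
  have hmul : H.mulVec ((WithLp.equiv 2 (Fin n → ℂ)) x)
      = ∑ i, c i • ((hH.eigenvalues i : ℂ) • (WithLp.equiv 2 (Fin n → ℂ)) (b i)) := by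
    rw [hx, ← H.mulVecLin_apply, map_sum]
    refine Finset.sum_congr rfl fun i _ => ?_
    rw [_root_.map_smul, H.mulVecLin_apply, WithLp.equiv_apply, hH.mulVec_eigenvectorBasis]
    ext j
    simp [Complex.real_smul, hb]
  rw [hmul, qq_dot_sum, Complex.ofReal_sum]
  refine Finset.sum_congr rfl fun i _ => ?_
  have key : dotProduct (star ((WithLp.equiv 2 (Fin n → ℂ)) x))
      ((WithLp.equiv 2 (Fin n → ℂ)) (b i)) = (starRingEnd ℂ) (c i) := by
    rw [WithLp.equiv_apply, WithLp.equiv_apply, dotProduct_comm,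
      ← EuclideanSpace.inner_eq_star_dotProduct x (b i), ← inner_conj_symm,
      ← OrthonormalBasis.repr_apply_apply]
  rw [dotProduct_smul, dotProduct_smul, key, smul_eq_mul, smul_eq_mul,
    Complex.ofReal_mul, ← Complex.mul_conj]
  ring

lemma qq_span_exists {n : ℕ} {H : Matrix (Fin n) (Fin n) ℂ} (hH : H.IsHermitian)
    (S : Finset (Fin n)) :
    ∃ V : Submodule ℂ (EuclideanSpace ℂ (Fin n)),
      Module.finrank ℂ V = S.card ∧
      ∀ x ∈ V, ∀ k ∉ S, hH.eigenvectorBasis.repr x k = 0 := by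
  set b := hH.eigenvectorBasis with hb
  set v : {i // i ∈ S} → EuclideanSpace ℂ (Fin n) := fun i => b i.1 with hv
  refine ⟨Submodule.span ℂ (Set.range v), ?_, ?_⟩
  · have li : LinearIndependent ℂ v :=
      (b.orthonormal.linearIndependent).comp Subtype.val Subtype.val_injective
    rw [finrank_span_eq_card li, Fintype.card_coe]
  · intro x hx k hk
    rw [OrthonormalBasis.repr_apply_apply]
    induction hx using Submodule.span_induction with
    | mem y hy =>
      obtain ⟨i, rfl⟩ := hy
      exact b.orthonormal.2 (fun h => hk (h ▸ i.2))
    | zero => exact inner_zero_right _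
    | add y z _ _ hy hz => rw [inner_add_right, hy, hz, add_zero]
    | smul a y _ hy => rw [inner_smul_right, hy, mul_zero]

lemma qq_dim_le {n : ℕ} (H : Matrix (Fin n) (Fin n) ℂ)
    (U V : Submodule ℂ (EuclideanSpace ℂ (Fin n)))
    (hU : ∀ x ∈ U, x ≠ 0 →
      0 < dotProduct (star (WithLp.equiv 2 (Fin n → ℂ) x)) (H.mulVec (WithLp.equiv 2 (Fin n → ℂ) x)))
    (hV : ∀ x ∈ V,
      dotProduct (star (WithLp.equiv 2 (Fin n → ℂ) x)) (H.mulVec (WithLp.equiv 2 (Fin n → ℂ) x)) ≤ 0) :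
    Module.finrank ℂ U + Module.finrank ℂ V ≤ n := by
  have hdisj : U ⊓ V = ⊥ := by
    rw [Submodule.eq_bot_iff]
    intro x hx
    by_contra hne
    exact absurd ((hU x hx.1 hne).trans_le (hV x hx.2)) (lt_irrefl _)
  calc Module.finrank ℂ U + Module.finrank ℂ V
      = Module.finrank ℂ ↥(U ⊔ V) + Module.finrank ℂ ↥(U ⊓ V) :=
        (Submodule.finrank_sup_add_finrank_inf_eq U V).symm
    _ = Module.finrank ℂ ↥(U ⊔ V) := by rw [hdisj, finrank_bot, add_zero]
    _ ≤ Module.finrank ℂ (EuclideanSpace ℂ (Fin n)) := Submodule.finrank_le _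
    _ = n := finrank_euclideanSpace_fin

lemma qq_lift {n : ℕ} {H : Matrix (Fin n) (Fin n) ℂ} (hH : H.IsHermitian)
    (p : Fin n) (ha : H p p ≠ 0) (y : {q : Fin n // q ≠ p} → ℂ) :
    (H.mulVec (fun i => if h : i = p then
        -(∑ j : {q : Fin n // q ≠ p}, H p j.1 * y j) / H p p else y ⟨i, h⟩)) p = 0 ∧
      dotProduct
        (star (fun i => if h : i = p then
          -(∑ j : {q : Fin n // q ≠ p}, H p j.1 * y j) / H p p else y ⟨i, h⟩))
        (H.mulVec (fun i => if h : i = p then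
          -(∑ j : {q : Fin n // q ≠ p}, H p j.1 * y j) / H p p else y ⟨i, h⟩)) =
        (∑ i : {q : Fin n // q ≠ p}, ∑ j : {q : Fin n // q ≠ p},
          (starRingEnd ℂ) (y i) * H i.1 j.1 * y j) -
          (starRingEnd ℂ) (∑ j : {q : Fin n // q ≠ p}, H p j.1 * y j) *
            (∑ j : {q : Fin n // q ≠ p}, H p j.1 * y j) / H p p := by
  set β := ∑ j : {q : Fin n // q ≠ p}, H p j.1 * y j with hβ
  set x : Fin n → ℂ := fun i => if h : i = p then -β / H p p else y ⟨i, h⟩ with hx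
  have hxp : x p = -β / H p p := by simp [hx]
  have hxs : ∀ i : {q : Fin n // q ≠ p}, x i.1 = y i := fun i => dif_neg i.2
  have hmv : ∀ i : Fin n, (H.mulVec x) i
      = H i p * (-β / H p p) + ∑ j : {q : Fin n // q ≠ p}, H i j.1 * y j := by
    intro i
    show dotProduct (fun j => H i j) x = _
    rw [dotProduct, qq_sum_split p (fun j => H i j * x j), hxp]
    congr 1
    exact Finset.sum_congr rfl fun j _ => by rw [hxs j]
  have h1 : (H.mulVec x) p = 0 := by
    have hcan : H p p * (-β / H p p) = -β := by field_simp
    rw [hmv p, hcan, neg_add_cancel]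
  refine ⟨h1, ?_⟩
  have hconjβ : (starRingEnd ℂ) β = ∑ i : {q : Fin n // q ≠ p}, (starRingEnd ℂ) (y i) * H i.1 p := by
    rw [hβ, map_sum]
    refine Finset.sum_congr rfl fun j _ => ?_
    rw [_root_.map_mul, ← hH.apply]
    simp only [RCLike.star_def, Complex.conj_conj]
    ring
  rw [dotProduct, qq_sum_split p (fun i => star x i * (H.mulVec x) i)]
  simp only [Pi.star_apply]
  rw [h1, mul_zero, zero_add]
  have hterm : ∀ i : {q : Fin n // q ≠ p}, (starRingEnd ℂ) (x i.1) * (H.mulVec x) i.1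
      = (starRingEnd ℂ) (y i) * H i.1 p * (-β / H p p)
        + ∑ j : {q : Fin n // q ≠ p}, (starRingEnd ℂ) (y i) * H i.1 j.1 * y j := by
    intro i
    rw [hxs i, hmv i.1, mul_add, Finset.mul_sum]
    congr 1
    · ring
    · exact Finset.sum_congr rfl fun j _ => by ring
  rw [show (fun i : {q : Fin n // q ≠ p} => star (x i.1) * (H.mulVec x) i.1)
    = fun i => (starRingEnd ℂ) (x i.1) * (H.mulVec x) i.1 from rfl]
  rw [Finset.sum_congr rfl fun i _ => hterm i, Finset.sum_add_distrib, ← Finset.sum_mul, ← hconjβ]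
  ring

lemma qq_F_rel {n : ℕ} {K H : Matrix (Fin n) (Fin n) ℂ} (hKh : K.IsHermitian)
    (hKne : ∀ i j, K i j ≠ 0) (hHdef : ∀ i j, H i j = (K i j)⁻¹) (p : Fin n)
    (y : {q : Fin n // q ≠ p} → ℂ) :
    (∑ i : {q : Fin n // q ≠ p}, ∑ j : {q : Fin n // q ≠ p},
        (starRingEnd ℂ) (y i) * H i.1 j.1 * y j) -
      (starRingEnd ℂ) (∑ j : {q : Fin n // q ≠ p}, H p j.1 * y j) *
        (∑ j : {q : Fin n // q ≠ p}, H p j.1 * y j) / H p p =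
    -(K p p) * dotProduct (star fun i : {q : Fin n // q ≠ p} => y i / K p i.1)
      ((Matrix.of fun i j : {q : Fin n // q ≠ p} =>
          1 - K i.1 p * K p j.1 / (K i.1 j.1 * K p p)).mulVec
        (fun i : {q : Fin n // q ≠ p} => y i / K p i.1)) := by
  rw [dotProduct]
  simp only [Matrix.mulVec, dotProduct, Pi.star_apply, Matrix.of_apply, RCLike.star_def]
  rw [map_sum, Finset.sum_mul_sum]
  rw [Finset.mul_sum]
  rw [div_eq_mul_inv, Finset.sum_mul, ← Finset.sum_sub_distrib]
  refine Finset.sum_congr rfl fun i _ => ?_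
  rw [Finset.sum_mul, ← Finset.sum_sub_distrib, Finset.mul_sum, Finset.mul_sum]
  refine Finset.sum_congr rfl fun j _ => ?_
  have e1 : (starRingEnd ℂ) (K p i.1) = K i.1 p := by
    rw [← hKh.apply i.1 p, RCLike.star_def]
  have e2 : (starRingEnd ℂ) (y i / K p i.1) = (starRingEnd ℂ) (y i) / K i.1 p := by
    rw [map_div₀, e1]
  rw [hHdef, hHdef, hHdef, e2, _root_.map_mul, map_inv₀, hHdef, e1]
  have h1 := hKne i.1 j.1
  have h2 := hKne i.1 p
  have h3 := hKne p j.1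
  have h4 := hKne p p
  field_simp
  ring

lemma qq_neg_scale' {c : ℂ} {κ : ℝ} (hκ : 0 < κ) (hc : c = (κ : ℂ)) (w : ℂ) :
    -c * w ≤ 0 ↔ 0 ≤ w := by
  subst hc
  rw [Complex.le_def, Complex.le_def]
  simp only [Complex.mul_re, Complex.mul_im, Complex.neg_re, Complex.neg_im,
    Complex.ofReal_re, Complex.ofReal_im, Complex.zero_re, Complex.zero_im]
  constructor
  · rintro ⟨h1, h2⟩
    constructor <;> nlinarith
  · rintro ⟨h1, h2⟩
    constructor <;> nlinarith

lemma qq_span_nonpos {n : ℕ} {H : Matrix (Fin n) (Fin n) ℂ} (hH : H.IsHermitian) :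
    ∃ V : Submodule ℂ (EuclideanSpace ℂ (Fin n)),
      Module.finrank ℂ V = (Finset.univ.filter fun i => ¬ 0 < hH.eigenvalues i).card ∧
      ∀ x ∈ V, dotProduct (star (WithLp.equiv 2 (Fin n → ℂ) x))
        (H.mulVec (WithLp.equiv 2 (Fin n → ℂ) x)) ≤ 0 := by
  obtain ⟨V, hdim, hvan⟩ := qq_span_exists hH (Finset.univ.filter fun i => ¬ 0 < hH.eigenvalues i)
  refine ⟨V, hdim, fun x hx => ?_⟩
  rw [qq_spectral hH x, qq_real_nonpos]
  apply Finset.sum_nonpos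
  intro k _
  by_cases hk : k ∈ Finset.univ.filter fun i => ¬ 0 < hH.eigenvalues i
  · have hev : hH.eigenvalues k ≤ 0 := le_of_not_gt (Finset.mem_filter.mp hk).2
    exact mul_nonpos_of_nonpos_of_nonneg hev (Complex.normSq_nonneg _)
  · rw [hvan x hx k hk]
    simp

lemma qq_span_pospair {n : ℕ} {H : Matrix (Fin n) (Fin n) ℂ} (hH : H.IsHermitian)
    {i j : Fin n} (hij : i ≠ j) (hi : 0 < hH.eigenvalues i) (hj : 0 < hH.eigenvalues j) :
    ∃ U : Submodule ℂ (EuclideanSpace ℂ (Fin n)),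
      Module.finrank ℂ U = 2 ∧
      ∀ x ∈ U, x ≠ 0 → 0 < dotProduct (star (WithLp.equiv 2 (Fin n → ℂ) x))
        (H.mulVec (WithLp.equiv 2 (Fin n → ℂ) x)) := by
  obtain ⟨U, hdim, hvan⟩ := qq_span_exists hH {i, j}
  rw [Finset.card_pair hij] at hdim
  refine ⟨U, hdim, fun x hx hx0 => ?_⟩
  rw [qq_spectral hH x, ← Complex.ofReal_zero, Complex.real_lt_real]
  have hrepr : hH.eigenvectorBasis.repr x ≠ 0 := by
    simpa using (hH.eigenvectorBasis.repr.map_eq_zero_iff).not.mpr hx0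
  obtain ⟨k, hk⟩ := Function.ne_iff.mp ((WithLp.ofLp_eq_zero (p := 2)).not.mpr hrepr)
  have hk' : hH.eigenvectorBasis.repr x k ≠ 0 := by simpa using hk
  have hkmem : k ∈ ({i, j} : Finset (Fin n)) := by
    by_contra hcon
    exact hk' (hvan x hx k hcon)
  have pos_of_mem : ∀ l ∈ ({i, j} : Finset (Fin n)), 0 < hH.eigenvalues l := by
    intro l hl
    rcases Finset.mem_insert.mp hl with h | h
    · exact h ▸ hi
    · exact (Finset.mem_singleton.mp h) ▸ hj
  refine Finset.sum_pos' (fun l _ => ?_) ⟨k, Finset.mem_univ k, ?_⟩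
  · by_cases hl : l ∈ ({i, j} : Finset (Fin n))
    · exact mul_nonneg (pos_of_mem l hl).le (Complex.normSq_nonneg _)
    · rw [hvan x hx l hl]
      simp
  · exact mul_pos (pos_of_mem k hkmem) (by simpa [Complex.normSq_pos] using hk')

lemma qq_pd_pair {n : ℕ} {H : Matrix (Fin n) (Fin n) ℂ} (hH : H.IsHermitian)
    (p : Fin n) (x : Fin n → ℂ) (h0 : (H.mulVec x) p = 0)
    (i₀ : Fin n) (hi₀ : i₀ ≠ p) (hx0 : x i₀ ≠ 0)
    {r κ : ℝ} (hr : 0 < r) (hQx : dotProduct (star x) (H.mulVec x) = (r : ℂ))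
    (hκ : 0 < κ) (hHpp : H p p = (κ : ℂ)) :
    ∃ U : Submodule ℂ (EuclideanSpace ℂ (Fin n)),
      2 ≤ Module.finrank ℂ U ∧
      ∀ z ∈ U, z ≠ 0 → 0 < dotProduct (star (WithLp.equiv 2 (Fin n → ℂ) z))
        (H.mulVec (WithLp.equiv 2 (Fin n → ℂ) z)) := by
  set s : Fin n → ℂ := Pi.single p 1 with hs
  have hstars : star s = s := by
    ext i
    by_cases h : i = p
    · subst h; simp [hs]
    · simp [hs, Pi.single_eq_of_ne h]
  have d2 : dotProduct (star s) (H.mulVec x) = 0 := by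
    rw [hstars, hs, single_dotProduct, h0, mul_zero]
  have d3 : dotProduct (star x) (H.mulVec s) = 0 := by
    rw [qq_herm_dot hH x s, d2, map_zero]
  have d4 : dotProduct (star s) (H.mulVec s) = (κ : ℂ) := by
    rw [hs, qq_dot_single, hHpp]
  set xE : EuclideanSpace ℂ (Fin n) := (WithLp.equiv 2 (Fin n → ℂ)).symm x with hxE
  set sE : EuclideanSpace ℂ (Fin n) := (WithLp.equiv 2 (Fin n → ℂ)).symm s with hsE
  have hexE : WithLp.equiv 2 (Fin n → ℂ) xE = x := Equiv.apply_symm_apply _ _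
  have hesE : WithLp.equiv 2 (Fin n → ℂ) sE = s := Equiv.apply_symm_apply _ _
  have li : LinearIndependent ℂ ![xE, sE] := by
    rw [LinearIndependent.pair_iff]
    intro a b hab
    have hab' : a • x + b • s = 0 := by
      have := congrArg (WithLp.equiv 2 (Fin n → ℂ)) hab
      rwa [qq_equiv_add, qq_equiv_smul, qq_equiv_smul, hexE, hesE,
        qq_equiv_zero] at this
    have ha : a = 0 := by
      have h1 := congrFun hab' i₀
      simp only [Pi.add_apply, Pi.smul_apply, smul_eq_mul, Pi.zero_apply, hs,
        Pi.single_eq_of_ne hi₀, mul_zero, add_zero] at h1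
      exact (mul_eq_zero.mp h1).resolve_right hx0
    have hb : b = 0 := by
      have h1 := congrFun hab' p
      simp only [ha, Pi.add_apply, Pi.smul_apply, smul_eq_mul, Pi.zero_apply, zero_mul,
        zero_add, hs, Pi.single_eq_same, mul_one] at h1
      exact h1
    exact ⟨ha, hb⟩
  have hrange : Set.range ![xE, sE] = {xE, sE} := by
    simp [Matrix.range_cons, Matrix.range_empty]
    exact Set.pair_comm _ _
  refine ⟨Submodule.span ℂ {xE, sE}, ?_, ?_⟩
  · rw [← hrange, finrank_span_eq_card li]
    simp
  · intro z hz hz0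
    obtain ⟨a, b, hab⟩ := Submodule.mem_span_pair.mp hz
    have hez : WithLp.equiv 2 (Fin n → ℂ) z = a • x + b • s := by
      rw [← hab, qq_equiv_add, qq_equiv_smul, qq_equiv_smul, hexE, hesE]
    have hnz : ¬(a = 0 ∧ b = 0) := by
      rintro ⟨rfl, rfl⟩
      apply hz0
      rw [← hab]
      simp
    rw [hez]
    have expand : dotProduct (star (a • x + b • s)) (H.mulVec (a • x + b • s))
        = (starRingEnd ℂ) a * a * (r : ℂ) + (starRingEnd ℂ) b * b * (κ : ℂ) := by
      rw [Matrix.mulVec_add, Matrix.mulVec_smul, Matrix.mulVec_smul, star_add, star_smul,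
        star_smul, add_dotProduct, smul_dotProduct, smul_dotProduct,
        dotProduct_add, dotProduct_add, dotProduct_smul,
        dotProduct_smul, dotProduct_smul, dotProduct_smul,
        hQx, d2, d3, d4]
      simp only [RCLike.star_def, smul_eq_mul]
      ring
    have conj_mul : ∀ w : ℂ, (starRingEnd ℂ) w * w = (Complex.normSq w : ℂ) := fun w => by
      rw [mul_comm, Complex.mul_conj]
    rw [expand, conj_mul, conj_mul, ← Complex.ofReal_mul, ← Complex.ofReal_mul,
      ← Complex.ofReal_add, ← Complex.ofReal_zero, Complex.real_lt_real]
    rcases not_and_or.mp hnz with h | h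
    · have := Complex.normSq_pos.mpr h
      nlinarith [Complex.normSq_nonneg b]
    · have := Complex.normSq_pos.mpr h
      nlinarith [Complex.normSq_nonneg a]

lemma qq_ker_W {n : ℕ} {H : Matrix (Fin n) (Fin n) ℂ} (hH : H.IsHermitian)
    (p : Fin n) (ha : H p p ≠ 0)
    (hQle : ∀ y : {q : Fin n // q ≠ p} → ℂ,
      (∑ i : {q : Fin n // q ≠ p}, ∑ j : {q : Fin n // q ≠ p},
        (starRingEnd ℂ) (y i) * H i.1 j.1 * y j) -
        (starRingEnd ℂ) (∑ j : {q : Fin n // q ≠ p}, H p j.1 * y j) *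
          (∑ j : {q : Fin n // q ≠ p}, H p j.1 * y j) / H p p ≤ 0) :
    ∃ W : Submodule ℂ (EuclideanSpace ℂ (Fin n)),
      n - 1 ≤ Module.finrank ℂ W ∧
      ∀ x ∈ W, dotProduct (star (WithLp.equiv 2 (Fin n → ℂ) x))
        (H.mulVec (WithLp.equiv 2 (Fin n → ℂ) x)) ≤ 0 := by
  set f : EuclideanSpace ℂ (Fin n) →ₗ[ℂ] ℂ :=
    (LinearMap.proj p) ∘ₗ H.mulVecLin ∘ₗ (WithLp.linearEquiv 2 ℂ (Fin n → ℂ)).toLinearMap with hf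
  refine ⟨LinearMap.ker f, ?_, ?_⟩
  · have hrk := LinearMap.finrank_range_add_finrank_ker f
    rw [finrank_euclideanSpace_fin] at hrk
    have hrange : Module.finrank ℂ (LinearMap.range f) ≤ 1 := by
      have := Submodule.finrank_le (LinearMap.range f)
      rwa [Module.finrank_self] at this
    omega
  · intro x hx
    have h0 : (H.mulVec (WithLp.equiv 2 (Fin n → ℂ) x)) p = 0 := by
      have := LinearMap.mem_ker.mp hx
      simpa [hf, Matrix.mulVecLin_apply] using this
    set v : Fin n → ℂ := WithLp.equiv 2 (Fin n → ℂ) x with hv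
    set y : {q : Fin n // q ≠ p} → ℂ := fun i => v i.1 with hy
    have hsplit : (H.mulVec v) p
        = H p p * v p + ∑ j : {q : Fin n // q ≠ p}, H p j.1 * y j := by
      show dotProduct (fun j => H p j) v = _
      rw [dotProduct, qq_sum_split p (fun j => H p j * v j)]
    have hvp : v p = -(∑ j : {q : Fin n // q ≠ p}, H p j.1 * y j) / H p p := by
      have heq : H p p * v p + (∑ j : {q : Fin n // q ≠ p}, H p j.1 * y j) = 0 := by
        rw [← hsplit, h0]
      rw [eq_div_iff ha]
      linear_combination heq
    have hkey : v = fun i => if h : i = p then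
        -(∑ j : {q : Fin n // q ≠ p}, H p j.1 * y j) / H p p else y ⟨i, h⟩ := by
      funext i
      by_cases h : i = p
      · subst h
        rw [dif_pos rfl, hvp]
      · rw [dif_neg h]
    have := (qq_lift hH p ha y).2
    rw [← hkey] at this
    rw [this]
    exact hQle y

end QuigginAux

theorem quiggin_criterion {n : ℕ} (hn : 0 < n)
    (K : Matrix (Fin n) (Fin n) ℂ) (hK : K.PosDef) (hKne : ∀ i j, K i j ≠ 0)
    (H : Matrix (Fin n) (Fin n) ℂ) (hHdef : ∀ i j, H i j = (K i j)⁻¹)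
    (hHerm : H.IsHermitian) :
    (Finset.univ.filter fun i => 0 < hHerm.eigenvalues i).card = 1 ↔
      ∀ p : Fin n,
        (Matrix.of fun i j : {q : Fin n // q ≠ p} =>
          1 - K i.1 p * K p j.1 / (K i.1 j.1 * K p p)).PosSemidef := by
  have hKh := hK.1
  constructor
  · -- forward: one positive eigenvalue implies all F^{(p)} PSD
    intro hm p
    obtain ⟨κ, hκ, hKpp⟩ := qq_Kpp hK p
    have hHpp : H p p = ((κ⁻¹ : ℝ) : ℂ) := by rw [hHdef, hKpp, Complex.ofReal_inv]
    have ha : H p p ≠ 0 := by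
      rw [hHpp]
      exact Complex.ofReal_ne_zero.mpr (inv_pos.mpr hκ).ne'
    refine .of_dotProduct_mulVec_nonneg (qq_F_herm hKh p) fun z => ?_
    set y : {q : Fin n // q ≠ p} → ℂ := fun i => z i * K p i.1 with hy
    have hzy : (fun i : {q : Fin n // q ≠ p} => y i / K p i.1) = z := by
      funext i
      exact mul_div_cancel_right₀ _ (hKne p i.1)
    have hrel := qq_F_rel hKh hKne hHdef p y
    rw [hzy] at hrel
    rw [← qq_neg_scale' hκ hKpp, ← hrel]
    by_contra hpos
    have hlift := qq_lift hHerm p ha y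
    set x : Fin n → ℂ := fun i => if h : i = p then
        -(∑ j : {q : Fin n // q ≠ p}, H p j.1 * y j) / H p p else y ⟨i, h⟩ with hxdef
    set xE : EuclideanSpace ℂ (Fin n) := (WithLp.equiv 2 (Fin n → ℂ)).symm x with hxE
    have hex : WithLp.equiv 2 (Fin n → ℂ) xE = x := Equiv.apply_symm_apply _ _
    have hQxE := qq_spectral hHerm xE
    rw [hex] at hQxE
    set r : ℝ := ∑ i, hHerm.eigenvalues i * Complex.normSq (hHerm.eigenvectorBasis.repr xE i)
      with hr
    have heq : (∑ i : {q : Fin n // q ≠ p}, ∑ j : {q : Fin n // q ≠ p},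
        (starRingEnd ℂ) (y i) * H i.1 j.1 * y j) -
        (starRingEnd ℂ) (∑ j : {q : Fin n // q ≠ p}, H p j.1 * y j) *
          (∑ j : {q : Fin n // q ≠ p}, H p j.1 * y j) / H p p = (r : ℂ) :=
      hlift.2.symm.trans hQxE
    have hrpos : 0 < r := by
      by_contra hrle
      exact hpos (heq ▸ qq_real_nonpos.mpr (not_lt.mp hrle))
    have hy0 : y ≠ 0 := by
      intro h0
      apply hpos
      rw [h0]
      simp
    obtain ⟨i₀, hi₀⟩ := Function.ne_iff.mp hy0
    have hi₀' : y i₀ ≠ 0 := by simpa using hi₀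
    have hxne : x i₀.1 ≠ 0 := by
      rw [hxdef]
      simpa [dif_neg i₀.2] using hi₀'
    obtain ⟨U, hU2, hUpd⟩ := qq_pd_pair hHerm p x hlift.1 i₀.1 i₀.2 hxne hrpos hQxE
      (inv_pos.mpr hκ) hHpp
    obtain ⟨V, hVdim, hVle⟩ := qq_span_nonpos hHerm
    have hcard : (Finset.univ.filter fun i => ¬ 0 < hHerm.eigenvalues i).card = n - 1 := by
      have htot := Finset.card_filter_add_card_filter_not
        (s := (Finset.univ : Finset (Fin n))) (fun i => 0 < hHerm.eigenvalues i)
      rw [Finset.card_univ, Fintype.card_fin] at htot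
      omega
    have hdim := qq_dim_le H U V hUpd hVle
    rw [hVdim, hcard] at hdim
    omega
  · -- backward
    intro hF
    set p : Fin n := ⟨0, hn⟩ with hp
    obtain ⟨κ, hκ, hKpp⟩ := qq_Kpp hK p
    have hHpp : H p p = ((κ⁻¹ : ℝ) : ℂ) := by rw [hHdef, hKpp, Complex.ofReal_inv]
    have ha : H p p ≠ 0 := by
      rw [hHpp]
      exact Complex.ofReal_ne_zero.mpr (inv_pos.mpr hκ).ne'
    have hge : 1 ≤ (Finset.univ.filter fun i => 0 < hHerm.eigenvalues i).card := by
      by_contra hcon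
      have hzero : (Finset.univ.filter fun i => 0 < hHerm.eigenvalues i).card = 0 := by omega
      have hall : ∀ i, ¬ 0 < hHerm.eigenvalues i := by
        intro i hi
        have hmem : i ∈ Finset.univ.filter fun i => 0 < hHerm.eigenvalues i :=
          Finset.mem_filter.mpr ⟨Finset.mem_univ i, hi⟩
        rw [Finset.card_eq_zero.mp hzero] at hmem
        simp at hmem
      set sE : EuclideanSpace ℂ (Fin n) := (WithLp.equiv 2 (Fin n → ℂ)).symm (Pi.single p 1)
        with hsE
      have hes : WithLp.equiv 2 (Fin n → ℂ) sE = Pi.single p 1 := Equiv.apply_symm_apply _ _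
      have h1 := qq_spectral hHerm sE
      rw [hes, qq_dot_single] at h1
      have hle : (∑ i, hHerm.eigenvalues i * Complex.normSq (hHerm.eigenvectorBasis.repr sE i))
          ≤ 0 :=
        Finset.sum_nonpos fun k _ =>
          mul_nonpos_of_nonpos_of_nonneg (le_of_not_gt (hall k)) (Complex.normSq_nonneg _)
      have h2 : H p p ≤ 0 := h1 ▸ qq_real_nonpos.mpr hle
      rw [hHpp] at h2
      exact absurd (qq_real_nonpos.mp h2) (not_le.mpr (inv_pos.mpr hκ))
    have hle1 : (Finset.univ.filter fun i => 0 < hHerm.eigenvalues i).card ≤ 1 := by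
      by_contra hcon
      push_neg at hcon
      obtain ⟨i, hi, j, hj, hij⟩ := Finset.one_lt_card.mp hcon
      have hi' := (Finset.mem_filter.mp hi).2
      have hj' := (Finset.mem_filter.mp hj).2
      obtain ⟨U, hU, hUpd⟩ := qq_span_pospair hHerm hij hi' hj'
      have hQle : ∀ y : {q : Fin n // q ≠ p} → ℂ,
          (∑ i : {q : Fin n // q ≠ p}, ∑ j : {q : Fin n // q ≠ p},
            (starRingEnd ℂ) (y i) * H i.1 j.1 * y j) -
            (starRingEnd ℂ) (∑ j : {q : Fin n // q ≠ p}, H p j.1 * y j) *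
              (∑ j : {q : Fin n // q ≠ p}, H p j.1 * y j) / H p p ≤ 0 := by
        intro y
        have hrel := qq_F_rel hKh hKne hHdef p y
        rw [hrel, qq_neg_scale' hκ hKpp]
        exact (hF p).dotProduct_mulVec_nonneg _
      obtain ⟨W, hWdim, hWle⟩ := qq_ker_W hHerm p ha hQle
      have hdim := qq_dim_le H U W hUpd hWle
      omega
    omega
end

section
/- The Dirichlet kernel k(w,z) = (1/(\bar{w}z)) log(1/(1 - \bar{w}z)) on the unit disk (with k(w,z) = 1 when \bar{w}z = 0) satisfies: the kernel 1 - 1/k(w,z) has a power series expansion in \bar{w}z with all nonnegative coefficients, and hence is a positive semidefinite kernel on the unit disk. -/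
open scoped ComplexOrder
open Matrix ComplexConjugate

noncomputable def dkA (n : ℕ) : ℝ := ((n : ℝ) + 1)⁻¹

noncomputable def dkC : ℕ → ℝ
  | 0 => 0
  | (n+1) => dkA (n+1) - ∑ j : Fin (n+1), dkC j * dkA (n+1-(j:ℕ))

lemma dkA_pos (n : ℕ) : 0 < dkA n := by
  rw [dkA]; positivity

lemma dkA_le_one (n : ℕ) : dkA n ≤ 1 := by
  rw [dkA, inv_le_one_iff₀]
  right; linarith [Nat.cast_nonneg (α := ℝ) n]

lemma dkC_succ (n : ℕ) :
    dkC (n+1) = dkA (n+1) - ∑ j ∈ Finset.range (n+1), dkC j * dkA (n+1-j) := by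
  rw [dkC, Finset.sum_range fun j => dkC j * dkA (n+1-j)]

lemma dkA_zero : dkA 0 = 1 := by simp [dkA]

lemma dk_conv (n : ℕ) (hn : 1 ≤ n) :
    ∑ j ∈ Finset.range (n+1), dkC j * dkA (n-j) = dkA n := by
  obtain ⟨m, rfl⟩ := Nat.exists_eq_add_of_le' hn
  rw [Finset.sum_range_succ, Nat.sub_self, dkA_zero, dkC_succ]
  ring

lemma dkA_ratio (i k : ℕ) (h : i ≤ k) :
    dkA (i+1) * dkA k ≤ dkA i * dkA (k+1) := by
  rw [dkA, dkA, dkA, dkA, ← mul_inv, ← mul_inv]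
  apply inv_anti₀
  · positivity
  · push_cast
    have : (i : ℝ) ≤ k := by exact_mod_cast h
    nlinarith

lemma dkC_nonneg : ∀ n, 0 ≤ dkC n := by
  intro n
  induction n using Nat.strong_induction_on with
  | _ n ih =>
    match n with
    | 0 => simp [dkC]
    | 1 => norm_num [dkC, dkA]
    | (m+2) =>
      rw [dkC_succ]
      rw [sub_nonneg]
      have key : (∑ j ∈ Finset.range (m+2), dkC j * dkA (m+2-j)) * dkA (m+1) ≤
          (∑ j ∈ Finset.range (m+2), dkC j * dkA (m+1-j)) * dkA (m+2) := by
        rw [Finset.sum_mul, Finset.sum_mul]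
        apply Finset.sum_le_sum
        intro j hj
        have hj' : j ≤ m + 1 := by
          have := Finset.mem_range.mp hj; omega
        have hsub : m + 2 - j = (m + 1 - j) + 1 := by omega
        rw [hsub, mul_assoc, mul_assoc]
        exact mul_le_mul_of_nonneg_left
          (dkA_ratio (m+1-j) (m+1) (Nat.sub_le _ _)) (ih j (by omega))
      rw [dk_conv (m+1) (by omega)] at key
      have hpos := dkA_pos (m+1)
      calc ∑ j ∈ Finset.range (m+2), dkC j * dkA (m+2-j)
          = (∑ j ∈ Finset.range (m+2), dkC j * dkA (m+2-j)) * dkA (m+1) / dkA (m+1) := by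
            field_simp
        _ ≤ dkA (m+1) * dkA (m+2) / dkA (m+1) := by
            gcongr
        _ = dkA (m+2) := by field_simp

lemma dkC_le_one (n : ℕ) : dkC n ≤ 1 := by
  match n with
  | 0 => norm_num [dkC]
  | (m+1) =>
    rw [dkC_succ]
    have h1 : 0 ≤ ∑ j ∈ Finset.range (m+1), dkC j * dkA (m+1-j) :=
      Finset.sum_nonneg fun j _ => mul_nonneg (dkC_nonneg j) (dkA_pos _).le
    linarith [dkA_le_one (m+1)]

lemma dk_summable_f {t : ℂ} (ht : ‖t‖ < 1) :
    Summable fun n : ℕ => ‖t ^ n / ((n : ℂ) + 1)‖ := by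
  apply Summable.of_nonneg_of_le (fun n => norm_nonneg _) (fun n => ?_)
    (summable_geometric_of_lt_one (norm_nonneg t) ht)
  rw [norm_div, norm_pow]
  have h1 : (1 : ℝ) ≤ ‖(n : ℂ) + 1‖ := by
    have : ((n : ℂ) + 1) = ((n + 1 : ℕ) : ℂ) := by push_cast; ring
    rw [this, Complex.norm_natCast]
    exact_mod_cast Nat.one_le_iff_ne_zero.mpr (Nat.succ_ne_zero n)
  calc ‖t‖ ^ n / ‖(n : ℂ) + 1‖ ≤ ‖t‖ ^ n / 1 :=
        div_le_div_of_nonneg_left (by positivity) one_pos h1 |>.trans_eq rfl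
    _ = ‖t‖ ^ n := by ring

lemma dk_summable_g {t : ℂ} (ht : ‖t‖ < 1) :
    Summable fun n : ℕ => ‖(dkC n : ℂ) * t ^ n‖ := by
  apply Summable.of_nonneg_of_le (fun n => norm_nonneg _) (fun n => ?_)
    (summable_geometric_of_lt_one (norm_nonneg t) ht)
  rw [norm_mul, norm_pow, Complex.norm_real, Real.norm_eq_abs,
    abs_of_nonneg (dkC_nonneg n)]
  calc dkC n * ‖t‖ ^ n ≤ 1 * ‖t‖ ^ n := by
        apply mul_le_mul_of_nonneg_right (dkC_le_one n) (by positivity)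
    _ = ‖t‖ ^ n := one_mul _

lemma dk_main {t : ℂ} (ht : ‖t‖ < 1) :
    1 - (∑' n : ℕ, t ^ n / ((n : ℂ) + 1))⁻¹ = ∑' n : ℕ, (dkC n : ℂ) * t ^ n := by
  set K := ∑' n : ℕ, t ^ n / ((n : ℂ) + 1) with hK
  set G := ∑' n : ℕ, (dkC n : ℂ) * t ^ n with hG
  have hcauchy : G * K = ∑' n : ℕ, ∑ k ∈ Finset.range (n + 1),
      ((dkC k : ℂ) * t ^ k) * (t ^ (n - k) / ((↑(n - k) : ℂ) + 1)) :=
    tsum_mul_tsum_eq_tsum_sum_range_of_summable_norm (dk_summable_g ht) (dk_summable_f ht)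
  have hinner : ∀ n : ℕ, (∑ k ∈ Finset.range (n + 1),
      ((dkC k : ℂ) * t ^ k) * (t ^ (n - k) / ((↑(n - k) : ℂ) + 1))) =
      t ^ n / ((n : ℂ) + 1) - (if n = 0 then 1 else 0) := by
    intro n
    have : ∀ k ∈ Finset.range (n + 1),
        ((dkC k : ℂ) * t ^ k) * (t ^ (n - k) / ((↑(n - k) : ℂ) + 1)) =
        ((dkC k * dkA (n - k) : ℝ) : ℂ) * t ^ n := by
      intro k hk
      have hk' : k ≤ n := by have := Finset.mem_range.mp hk; omega
      have hpow : t ^ k * t ^ (n - k) = t ^ n := by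
        rw [← pow_add]; congr 1; omega
      have hA : ((dkA (n - k) : ℝ) : ℂ) = ((↑(n - k) : ℂ) + 1)⁻¹ := by
        rw [dkA]; push_cast; ring
      push_cast
      rw [hA]
      field_simp
      rw [← hpow]; ring
    rw [Finset.sum_congr rfl this, ← Finset.sum_mul, ← Complex.ofReal_sum]
    rcases Nat.eq_zero_or_pos n with rfl | hn
    · simp [dkC]
    · rw [dk_conv n hn]
      have hA : ((dkA n : ℝ) : ℂ) = ((n : ℂ) + 1)⁻¹ := by
        rw [dkA]; push_cast; ring
      rw [hA, if_neg (Nat.pos_iff_ne_zero.mp hn)]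
      field_simp
      ring
  rw [funext hinner] at hcauchy
  have hsum_ite : Summable (fun n : ℕ => (if n = 0 then (1:ℂ) else 0)) := by
    apply summable_of_finite_support
    apply Set.Finite.subset (Set.finite_singleton 0)
    intro n hn
    simp only [Function.mem_support] at hn
    by_contra h
    simp only [Set.mem_singleton_iff] at h
    exact hn (if_neg h)
  have htsub : (∑' n : ℕ, (t ^ n / ((n : ℂ) + 1) - (if n = 0 then 1 else 0))) = K - 1 := by
    rw [Summable.tsum_sub (dk_summable_f ht).of_norm hsum_ite, ← hK]
    congr 1
    simp [tsum_ite_eq]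
  rw [htsub] at hcauchy
  have hK0 : K ≠ 0 := by
    intro h
    rw [h, mul_zero] at hcauchy
    have : (1 : ℂ) = 0 := by linear_combination hcauchy
    exact one_ne_zero this
  apply mul_right_cancel₀ hK0
  rw [sub_mul, inv_mul_cancel₀ hK0, hcauchy]
  ring

lemma dk_bound {w z : ℂ} (hw : ‖w‖ < 1) (hz : ‖z‖ < 1) : ‖conj w * z‖ < 1 := by
  rw [norm_mul, RCLike.norm_conj]
  nlinarith [norm_nonneg w, norm_nonneg z]

set_option maxHeartbeats 1000000 in
theorem dirichlet_kernel_complete_NP :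
    ∃ c : ℕ → ℝ, (∀ n, 0 ≤ c n) ∧
      (∀ w z : ℂ, ‖w‖ < 1 → ‖z‖ < 1 →
        1 - (∑' n : ℕ, (conj w * z) ^ n / ((n : ℂ) + 1))⁻¹ =
          ∑' n : ℕ, (c n : ℂ) * (conj w * z) ^ n) ∧
      (∀ (m : ℕ) (x : Fin m → ℂ), (∀ i, ‖x i‖ < 1) →
        (Matrix.of fun i j =>
          1 - (∑' n : ℕ, (conj (x i) * x j) ^ n / ((n : ℂ) + 1))⁻¹).PosSemidef) := by
  refine ⟨dkC, dkC_nonneg, fun w z hw hz => dk_main (dk_bound hw hz), ?_⟩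
  intro m x hx
  have hM : ∀ i j, (1 : ℂ) - (∑' n : ℕ, (conj (x i) * x j) ^ n / ((n : ℂ) + 1))⁻¹ =
      ∑' n : ℕ, (dkC n : ℂ) * (conj (x i) * x j) ^ n :=
    fun i j => dk_main (dk_bound (hx i) (hx j))
  rw [Matrix.posSemidef_iff_dotProduct_mulVec]; constructor
  · show _ᴴ = _
    ext i j
    simp only [Matrix.conjTranspose_apply, Matrix.of_apply]
    rw [hM j i, hM i j, tsum_star]
    apply tsum_congr
    intro n
    simp only [star_mul', star_pow, Complex.star_def, Complex.conj_conj, Complex.conj_ofReal]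
    ring
  · intro v
    set S : ℕ → ℂ := fun n => ∑ j, v j * (x j) ^ n with hS
    have hsumm : ∀ i j : Fin m, Summable
        (fun n : ℕ => (star (v i) * v j) * ((dkC n : ℂ) * (conj (x i) * x j) ^ n)) :=
      fun i j => ((dk_summable_g (dk_bound (hx i) (hx j))).of_norm).mul_left _
    have key : star v ⬝ᵥ ((Matrix.of fun i j =>
        1 - (∑' n : ℕ, (conj (x i) * x j) ^ n / ((n : ℂ) + 1))⁻¹) *ᵥ v) =
        ((∑' n : ℕ, dkC n * Complex.normSq (S n) : ℝ) : ℂ) := by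
      calc star v ⬝ᵥ _ = ∑ i, ∑ j, star (v i) *
            ((∑' n : ℕ, (dkC n : ℂ) * (conj (x i) * x j) ^ n) * v j) := by
            simp only [dotProduct, Matrix.mulVec, Matrix.of_apply, hM,
              Pi.star_apply, Finset.mul_sum]
        _ = ∑ i, ∑ j, ∑' n : ℕ, (star (v i) * v j) *
              ((dkC n : ℂ) * (conj (x i) * x j) ^ n) := by
            apply Finset.sum_congr rfl; intro i _
            apply Finset.sum_congr rfl; intro j _
            rw [tsum_mul_left]; ring
        _ = ∑' n : ℕ, ∑ i, ∑ j, (star (v i) * v j) *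
              ((dkC n : ℂ) * (conj (x i) * x j) ^ n) := by
            refine Eq.symm ((Summable.tsum_finsetSum (fun i _ => summable_sum (fun j _ => hsumm i j))).trans ?_)
            exact Finset.sum_congr rfl (fun i _ => Summable.tsum_finsetSum (fun j _ => hsumm i j))
        _ = ∑' n : ℕ, ((dkC n * Complex.normSq (S n) : ℝ) : ℂ) := by
            apply tsum_congr; intro n
            have hstar : star (S n) = ∑ i, star (v i) * (conj (x i)) ^ n := by
              simp [hS, star_sum, star_mul', star_pow, Complex.star_def]
            have hns : ((Complex.normSq (S n) : ℝ) : ℂ) = star (S n) * S n := by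
              rw [Complex.normSq_eq_conj_mul_self, Complex.star_def]
            push_cast
            rw [hns, hstar, hS, Finset.sum_mul_sum, Finset.mul_sum]
            apply Finset.sum_congr rfl; intro i _
            rw [Finset.mul_sum]
            apply Finset.sum_congr rfl; intro j _
            simp only [mul_pow]
            ring
        _ = _ := (Complex.ofReal_tsum _).symm
    rw [key, Complex.zero_le_real]
    apply tsum_nonneg
    intro n
    exact mul_nonneg (dkC_nonneg n) (Complex.normSq_nonneg _)
end
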